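/- For finite Borel measures μ on ℝ^k and ν on ℝ^{d-k}, the Fourier dimension of the product measure μ × ν equals the minimum of the Fourier dimensions of μ and ν. -/

import Mathlib

open MeasureTheory Metric Set
open scoped ENNReal NNReal Real

noncomputable section

abbrev Eℝ (n : ℕ) := EuclideanSpace ℝ (Fin n)

/-- The Fourier transform of a measure on ℝⁿ. -/
def ftm {n : ℕ} (μ : Measure (Eℝ n)) (z : Eℝ n) : ℂ :=
  ∫ x, Complex.exp (-(2 * Real.pi * (inner ℝ z x : ℝ)) * Complex.I) ∂μ

/-- The (topological) support of `μ` is contained in `X`. -/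
def SptIn {n : ℕ} (μ : Measure (Eℝ n)) (X : Set (Eℝ n)) : Prop :=
  ∀ U : Set (Eℝ n), IsOpen U → Disjoint U X → μ U = 0

/-- Fourier dimension of a measure (valued in ℝ≥0∞). -/
def fDim {n : ℕ} (μ : Measure (Eℝ n)) : ℝ≥0∞ :=
  ⨆ s ∈ {s : ℝ | 0 ≤ s ∧ ∃ C > 0, ∀ z : Eℝ n, z ≠ 0 → ‖ftm μ z‖ ≤ C * ‖z‖ ^ (-(s / 2))},
    ENNReal.ofReal s

/-- Finiteness of the energy J_{s,θ}(μ). -/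
def Jfin (n : ℕ) (μ : Measure (Eℝ n)) (s θ : ℝ) : Prop :=
  (∫⁻ z : Eℝ n, ENNReal.ofReal (‖ftm μ z‖ ^ (2 / θ) * ‖z‖ ^ (s / θ - (n : ℝ)))) < ∞

/-- The Fourier spectrum of a measure at θ. -/
def fSpec (n : ℕ) (μ : Measure (Eℝ n)) (θ : ℝ) : ℝ≥0∞ :=
  if θ = 0 then fDim μ
  else ⨆ s ∈ {s : ℝ | 0 ≤ s ∧ Jfin n μ s θ}, ENNReal.ofReal s

/-- The Fourier spectrum of a set at θ. -/
def fSpecSet (n : ℕ) (X : Set (Eℝ n)) (θ : ℝ) : ℝ≥0∞ :=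
  ⨆ μ ∈ {μ : Measure (Eℝ n) | μ ≠ 0 ∧ IsFiniteMeasure μ ∧ SptIn μ X},
    min (fSpec n μ θ) (n : ℝ≥0∞)

/-- The extended Fourier spectrum of a set at θ. -/
def eFSpecSet (n : ℕ) (X : Set (Eℝ n)) (θ : ℝ) : ℝ≥0∞ :=
  ⨆ μ ∈ {μ : Measure (Eℝ n) | μ ≠ 0 ∧ IsFiniteMeasure μ ∧ SptIn μ X}, fSpec n μ θ

/-- Fourier dimension of a set. -/
def fDimSet (n : ℕ) (X : Set (Eℝ n)) : ℝ≥0∞ := fSpecSet n X 0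

/-- Extended Fourier dimension of a set. -/
def eFDimSet (n : ℕ) (X : Set (Eℝ n)) : ℝ≥0∞ := eFSpecSet n X 0

/-- Identification of ℝᵏ × ℝᵐ with ℝ^{k+m}. -/
def prodMap (k m : ℕ) (p : Eℝ k × Eℝ m) : Eℝ (k + m) :=
  WithLp.toLp 2 (fun i : Fin (k + m) => (Fin.addCases (fun j => p.1 j) (fun j => p.2 j) i : ℝ))

/-- The product measure μ × ν, viewed as a measure on ℝ^{k+m}. -/
def mprod {k m : ℕ} (μ : Measure (Eℝ k)) (ν : Measure (Eℝ m)) : Measure (Eℝ (k + m)) :=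
  (μ.prod ν).map (prodMap k m)

/-- The unit cube [0,1]ⁿ. -/
def cube (n : ℕ) : Set (Eℝ n) := {x | ∀ i, x i ∈ Set.Icc (0 : ℝ) 1}

/-! ### Auxiliary lemmas -/

/-- Inverse of `prodMap`. -/
def splitMap (k m : ℕ) (w : Eℝ (k + m)) : Eℝ k × Eℝ m :=
  (WithLp.toLp 2 (fun i => w (Fin.castAdd m i)), WithLp.toLp 2 (fun j => w (Fin.natAdd k j)))

lemma prodMap_splitMap {k m : ℕ} (w : Eℝ (k + m)) : prodMap k m (splitMap k m w) = w := by
  ext i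
  refine Fin.addCases (fun j => ?_) (fun j => ?_) i <;> simp [prodMap, splitMap]

lemma continuous_prodMap {k m : ℕ} : Continuous (prodMap k m) := by
  refine (PiLp.continuous_toLp 2 _).comp ?_
  apply continuous_pi
  intro i
  refine Fin.addCases (fun j => ?_) (fun j => ?_) i <;>
    simp only [prodMap, Fin.addCases_left, Fin.addCases_right]
  · exact (continuous_apply j).comp ((PiLp.continuous_ofLp 2 _).comp continuous_fst)
  · exact (continuous_apply j).comp ((PiLp.continuous_ofLp 2 _).comp continuous_snd)

lemma inner_prodMap {k m : ℕ} (p q : Eℝ k × Eℝ m) :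
    (inner ℝ (prodMap k m p) (prodMap k m q) : ℝ) = inner ℝ p.1 q.1 + inner ℝ p.2 q.2 := by
  simp [PiLp.inner_apply, Fin.sum_univ_add, prodMap, RCLike.inner_apply]

lemma ftm_cont {n : ℕ} (z : Eℝ n) :
    Continuous fun x : Eℝ n => Complex.exp (-(2 * Real.pi * (inner ℝ z x : ℝ)) * Complex.I) := by
  have h1 : Continuous fun x : Eℝ n => (inner ℝ z x : ℝ) := continuous_const.inner continuous_id
  exact Complex.continuous_exp.comp
    (((continuous_const.mul (Complex.continuous_ofReal.comp h1)).neg).mul continuous_const)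

lemma ftm_mprod {k m : ℕ} (μ : Measure (Eℝ k)) (ν : Measure (Eℝ m))
    [IsFiniteMeasure μ] [IsFiniteMeasure ν] (p : Eℝ k × Eℝ m) :
    ftm (mprod μ ν) (prodMap k m p) = ftm μ p.1 * ftm ν p.2 := by
  rw [ftm, mprod, integral_map continuous_prodMap.aemeasurable
    (ftm_cont _).aestronglyMeasurable]
  have : ∀ q : Eℝ k × Eℝ m,
      Complex.exp (-(2 * Real.pi * (inner ℝ (prodMap k m p) (prodMap k m q) : ℝ)) * Complex.I)
      = Complex.exp (-(2 * Real.pi * (inner ℝ p.1 q.1 : ℝ)) * Complex.I)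
        * Complex.exp (-(2 * Real.pi * (inner ℝ p.2 q.2 : ℝ)) * Complex.I) := by
    intro q
    rw [inner_prodMap, ← Complex.exp_add]
    ring_nf
    push_cast
    ring_nf
  simp_rw [this]
  rw [integral_prod_mul (fun a => Complex.exp (-(2 * Real.pi * (inner ℝ p.1 a : ℝ)) * Complex.I))
    (fun b => Complex.exp (-(2 * Real.pi * (inner ℝ p.2 b : ℝ)) * Complex.I))]
  rfl

lemma ftm_zero {n : ℕ} (μ : Measure (Eℝ n)) : ftm μ 0 = ((μ univ).toReal : ℂ) := by
  simp [ftm, Measure.real]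

lemma norm_ftm_le {n : ℕ} (μ : Measure (Eℝ n)) (z : Eℝ n) : ‖ftm μ z‖ ≤ (μ univ).toReal := by
  refine (norm_integral_le_integral_norm _).trans ?_
  have : ∀ x : Eℝ n, ‖Complex.exp (-(2 * Real.pi * (inner ℝ z x : ℝ)) * Complex.I)‖ = 1 := by
    intro x
    rw [Complex.norm_exp]
    simp
  refine le_of_eq ?_
  calc ∫ x, ‖Complex.exp (-(2 * Real.pi * (inner ℝ z x : ℝ)) * Complex.I)‖ ∂μ
      = ∫ _x, (1:ℝ) ∂μ := integral_congr_ae (Filter.Eventually.of_forall this)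
    _ = (μ univ).toReal := by simp [Measure.real]

lemma norm_sq_prodMap {k m : ℕ} (p : Eℝ k × Eℝ m) :
    ‖prodMap k m p‖ ^ 2 = ‖p.1‖ ^ 2 + ‖p.2‖ ^ 2 := by
  rw [← real_inner_self_eq_norm_sq, ← real_inner_self_eq_norm_sq, ← real_inner_self_eq_norm_sq]
  exact inner_prodMap p p

lemma max_ge_prodMap {k m : ℕ} (p : Eℝ k × Eℝ m) :
    ‖prodMap k m p‖ / Real.sqrt 2 ≤ max ‖p.1‖ ‖p.2‖ := by
  have h := norm_sq_prodMap p
  have h2 : (0:ℝ) < Real.sqrt 2 := Real.sqrt_pos.mpr (by norm_num)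
  have h3 : Real.sqrt 2 ^ 2 = 2 := Real.sq_sqrt (by norm_num)
  rw [div_le_iff₀ h2]
  have key : ∀ b : ℝ, 0 ≤ b → ‖prodMap k m p‖ ^ 2 ≤ 2 * b ^ 2 →
      ‖prodMap k m p‖ ≤ b * Real.sqrt 2 := by
    intro b hb hle
    have hb2 : (0:ℝ) ≤ b * Real.sqrt 2 := mul_nonneg hb h2.le
    have hsq : ‖prodMap k m p‖ ^ 2 ≤ (b * Real.sqrt 2) ^ 2 := by nlinarith
    calc ‖prodMap k m p‖ = Real.sqrt (‖prodMap k m p‖ ^ 2) := (Real.sqrt_sq (norm_nonneg _)).symm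
      _ ≤ Real.sqrt ((b * Real.sqrt 2) ^ 2) := Real.sqrt_le_sqrt hsq
      _ = b * Real.sqrt 2 := Real.sqrt_sq hb2
  rcases le_total ‖p.1‖ ‖p.2‖ with hle | hle
  · rw [max_eq_right hle]
    exact key _ (norm_nonneg _) (by nlinarith [norm_nonneg p.1])
  · rw [max_eq_left hle]
    exact key _ (norm_nonneg _) (by nlinarith [norm_nonneg p.2])

lemma norm_prodMap_eq_fst {k m : ℕ} (z : Eℝ k) :
    ‖prodMap k m (z, 0)‖ = ‖z‖ := by
  have h := norm_sq_prodMap (p := (z, (0 : Eℝ m)))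
  simp only [norm_zero] at h
  calc ‖prodMap k m (z, 0)‖ = Real.sqrt (‖prodMap k m (z, 0)‖ ^ 2) :=
        (Real.sqrt_sq (norm_nonneg _)).symm
    _ = Real.sqrt (‖z‖ ^ 2) := by rw [h]; ring_nf
    _ = ‖z‖ := Real.sqrt_sq (norm_nonneg _)

lemma norm_prodMap_eq_snd {k m : ℕ} (z : Eℝ m) :
    ‖prodMap k m (0, z)‖ = ‖z‖ := by
  have h := norm_sq_prodMap (p := ((0 : Eℝ k), z))
  simp only [norm_zero] at h
  calc ‖prodMap k m (0, z)‖ = Real.sqrt (‖prodMap k m (0, z)‖ ^ 2) :=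
        (Real.sqrt_sq (norm_nonneg _)).symm
    _ = Real.sqrt (‖z‖ ^ 2) := by rw [h]; ring_nf
    _ = ‖z‖ := Real.sqrt_sq (norm_nonneg _)

/-- The admissible set of decay exponents. -/
def fSet {n : ℕ} (μ : Measure (Eℝ n)) : Set ℝ :=
  {s : ℝ | 0 ≤ s ∧ ∃ C > 0, ∀ z : Eℝ n, z ≠ 0 → ‖ftm μ z‖ ≤ C * ‖z‖ ^ (-(s / 2))}

lemma fDim_eq_biSup {n : ℕ} (μ : Measure (Eℝ n)) :
    fDim μ = ⨆ s ∈ fSet μ, ENNReal.ofReal s := rfl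

lemma fSet_down {n : ℕ} (μ : Measure (Eℝ n)) [IsFiniteMeasure μ] :
    ∀ s ∈ fSet μ, ∀ t, 0 ≤ t → t ≤ s → t ∈ fSet μ := by
  rintro s ⟨hs0, C, hC, hbd⟩ t ht0 hts
  have hM : (0:ℝ) ≤ (μ univ).toReal := ENNReal.toReal_nonneg
  refine ⟨ht0, C + (μ univ).toReal + 1, by positivity, fun z hz => ?_⟩
  have hz0 : 0 < ‖z‖ := norm_pos_iff.mpr hz
  have hnn : (0:ℝ) ≤ ‖z‖ ^ (-(t/2)) := Real.rpow_nonneg hz0.le _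
  rcases le_or_gt 1 ‖z‖ with h1 | h1
  · have h2 : ‖z‖ ^ (-(s/2)) ≤ ‖z‖ ^ (-(t/2)) :=
      Real.rpow_le_rpow_of_exponent_le h1 (by linarith)
    calc ‖ftm μ z‖ ≤ C * ‖z‖ ^ (-(s/2)) := hbd z hz
      _ ≤ C * ‖z‖ ^ (-(t/2)) := mul_le_mul_of_nonneg_left h2 hC.le
      _ ≤ (C + (μ univ).toReal + 1) * ‖z‖ ^ (-(t/2)) :=
        mul_le_mul_of_nonneg_right (by linarith) hnn
  · have h2 : (1:ℝ) ≤ ‖z‖ ^ (-(t/2)) :=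
      Real.one_le_rpow_of_pos_of_le_one_of_nonpos hz0 h1.le (by linarith)
    calc ‖ftm μ z‖ ≤ (μ univ).toReal := norm_ftm_le μ z
      _ = (μ univ).toReal * 1 := (mul_one _).symm
      _ ≤ (C + (μ univ).toReal + 1) * ‖z‖ ^ (-(t/2)) :=
        mul_le_mul (by linarith) h2 zero_le_one (by positivity)

lemma aux_bound {s C M F G r a : ℝ} (hC : 0 < C) (hM : 0 ≤ M)
    (hr : 0 < r) (ha : r / Real.sqrt 2 ≤ a)
    (hF : F ≤ C * a ^ (-(s/2))) (hG : G ≤ M) (hF0 : 0 ≤ F) (hG0 : 0 ≤ G) (hs : 0 ≤ s) :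
    F * G ≤ C * M * Real.sqrt 2 ^ (s/2) * r ^ (-(s/2)) := by
  have h2 : (0:ℝ) < Real.sqrt 2 := Real.sqrt_pos.mpr (by norm_num)
  have hra : 0 < r / Real.sqrt 2 := div_pos hr h2
  have h1 : a ^ (-(s/2)) ≤ (r / Real.sqrt 2) ^ (-(s/2)) :=
    Real.rpow_le_rpow_of_nonpos hra ha (by linarith)
  have heq : (r / Real.sqrt 2) ^ (-(s/2)) = r ^ (-(s/2)) * Real.sqrt 2 ^ (s/2) := by
    rw [Real.div_rpow hr.le h2.le, Real.rpow_neg h2.le (s/2), div_inv_eq_mul]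
  calc F * G ≤ (C * a ^ (-(s/2))) * M :=
        mul_le_mul hF hG hG0 (mul_nonneg hC.le (Real.rpow_nonneg (hra.le.trans ha) _))
    _ ≤ (C * ((r / Real.sqrt 2) ^ (-(s/2)))) * M :=
        mul_le_mul_of_nonneg_right (mul_le_mul_of_nonneg_left h1 hC.le) hM
    _ = C * M * Real.sqrt 2 ^ (s/2) * r ^ (-(s/2)) := by rw [heq]; ring

lemma fSet_mprod {k m : ℕ} (μ : Measure (Eℝ k)) (ν : Measure (Eℝ m))
    [IsFiniteMeasure μ] [IsFiniteMeasure ν] (hμ : μ ≠ 0) (hν : ν ≠ 0) :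
    fSet (mprod μ ν) = fSet μ ∩ fSet ν := by
  have hMμ : (0:ℝ) < (μ univ).toReal :=
    ENNReal.toReal_pos (Measure.measure_univ_pos.mpr hμ).ne' (measure_ne_top μ univ)
  have hMν : (0:ℝ) < (ν univ).toReal :=
    ENNReal.toReal_pos (Measure.measure_univ_pos.mpr hν).ne' (measure_ne_top ν univ)
  apply Set.Subset.antisymm
  · rintro s ⟨hs0, C, hC, hbd⟩
    constructor
    · refine ⟨hs0, C / (ν univ).toReal, div_pos hC hMν, fun z hz => ?_⟩
      have hw : ‖prodMap k m ((z, (0:Eℝ m)))‖ = ‖z‖ := norm_prodMap_eq_fst z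
      have hwne : prodMap k m ((z, (0:Eℝ m))) ≠ 0 := by
        rw [← norm_ne_zero_iff, hw]
        exact norm_ne_zero_iff.mpr hz
      have h := hbd _ hwne
      rw [ftm_mprod, norm_mul, hw] at h
      have hν0 : ‖ftm ν ((z, (0:Eℝ m))).2‖ = (ν univ).toReal := by
        rw [show ((z, (0:Eℝ m))).2 = 0 from rfl, ftm_zero, Complex.norm_real,
          Real.norm_eq_abs, abs_of_nonneg ENNReal.toReal_nonneg]
      rw [hν0] at h
      rw [div_mul_eq_mul_div, le_div_iff₀ hMν]
      exact h
    · refine ⟨hs0, C / (μ univ).toReal, div_pos hC hMμ, fun z hz => ?_⟩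
      have hw : ‖prodMap k m (((0:Eℝ k), z))‖ = ‖z‖ := norm_prodMap_eq_snd z
      have hwne : prodMap k m (((0:Eℝ k), z)) ≠ 0 := by
        rw [← norm_ne_zero_iff, hw]
        exact norm_ne_zero_iff.mpr hz
      have h := hbd _ hwne
      rw [ftm_mprod, norm_mul, hw] at h
      have hμ0 : ‖ftm μ (((0:Eℝ k), z)).1‖ = (μ univ).toReal := by
        rw [show (((0:Eℝ k), z)).1 = 0 from rfl, ftm_zero, Complex.norm_real,
          Real.norm_eq_abs, abs_of_nonneg ENNReal.toReal_nonneg]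
      rw [hμ0] at h
      rw [div_mul_eq_mul_div, le_div_iff₀ hMμ]
      calc ‖ftm ν z‖ * (μ univ).toReal = (μ univ).toReal * ‖ftm ν z‖ := mul_comm _ _
        _ ≤ C * ‖z‖ ^ (-(s/2)) := h
  · rintro s ⟨⟨hs0, C₁, hC₁, h₁⟩, _, C₂, hC₂, h₂⟩
    have h2 : (0:ℝ) < Real.sqrt 2 := Real.sqrt_pos.mpr (by norm_num)
    refine ⟨hs0, (C₁ * (ν univ).toReal + C₂ * (μ univ).toReal + 1) * Real.sqrt 2 ^ (s/2),
      by positivity, fun w hw => ?_⟩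
    have hwp : w = prodMap k m (splitMap k m w) := (prodMap_splitMap w).symm
    set p := splitMap k m w with hp
    rw [hwp, ftm_mprod, norm_mul]
    have hr : (0:ℝ) < ‖prodMap k m p‖ := by
      rw [← hwp]
      exact norm_pos_iff.mpr hw
    have hrs : (0:ℝ) ≤ ‖prodMap k m p‖ ^ (-(s/2)) := Real.rpow_nonneg hr.le _
    have hmax := max_ge_prodMap p
    have hbig : C₁ * (ν univ).toReal ⊔ C₂ * (μ univ).toReal ≤
        C₁ * (ν univ).toReal + C₂ * (μ univ).toReal + 1 := by
      rcases max_cases (C₁ * (ν univ).toReal) (C₂ * (μ univ).toReal) with ⟨h, _⟩ | ⟨h, _⟩ <;>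
        rw [h] <;> nlinarith
    have hfin : ∀ D : ℝ, D ≤ C₁ * (ν univ).toReal + C₂ * (μ univ).toReal + 1 →
        ‖ftm μ p.1‖ * ‖ftm ν p.2‖ ≤ D * Real.sqrt 2 ^ (s/2) * ‖prodMap k m p‖ ^ (-(s/2)) →
        ‖ftm μ p.1‖ * ‖ftm ν p.2‖ ≤
          (C₁ * (ν univ).toReal + C₂ * (μ univ).toReal + 1) * Real.sqrt 2 ^ (s/2) *
            ‖prodMap k m p‖ ^ (-(s/2)) := by
      intro D hD hle
      refine hle.trans ?_
      have : (0:ℝ) ≤ Real.sqrt 2 ^ (s/2) * ‖prodMap k m p‖ ^ (-(s/2)) := by positivity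
      nlinarith [this]
    rcases le_total ‖p.1‖ ‖p.2‖ with hle | hle
    · -- p.2 is the large coordinate
      rw [max_eq_right hle] at hmax
      have hp2 : p.2 ≠ 0 := by
        rw [← norm_ne_zero_iff]
        have := div_pos hr h2
        intro h0
        rw [h0] at hmax
        linarith
      refine hfin (C₂ * (μ univ).toReal) (by nlinarith) ?_
      have := aux_bound hC₂ ENNReal.toReal_nonneg hr hmax (h₂ p.2 hp2)
        (norm_ftm_le μ p.1) (norm_nonneg _) (norm_nonneg _) hs0
      calc ‖ftm μ p.1‖ * ‖ftm ν p.2‖ = ‖ftm ν p.2‖ * ‖ftm μ p.1‖ := mul_comm _ _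
        _ ≤ C₂ * (μ univ).toReal * Real.sqrt 2 ^ (s/2) * ‖prodMap k m p‖ ^ (-(s/2)) := this
    · -- p.1 is the large coordinate
      rw [max_eq_left hle] at hmax
      have hp1 : p.1 ≠ 0 := by
        rw [← norm_ne_zero_iff]
        have := div_pos hr h2
        intro h0
        rw [h0] at hmax
        linarith
      refine hfin (C₁ * (ν univ).toReal) (by nlinarith) ?_
      exact aux_bound hC₁ ENNReal.toReal_nonneg hr hmax (h₁ p.1 hp1)
        (norm_ftm_le ν p.2) (norm_nonneg _) (norm_nonneg _) hs0

lemma biSup_inter_eq_min (A B : Set ℝ)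
    (hAd : ∀ s ∈ A, ∀ t, 0 ≤ t → t ≤ s → t ∈ A)
    (hBd : ∀ s ∈ B, ∀ t, 0 ≤ t → t ≤ s → t ∈ B) :
    (⨆ s ∈ A ∩ B, ENNReal.ofReal s) =
      min (⨆ s ∈ A, ENNReal.ofReal s) (⨆ s ∈ B, ENNReal.ofReal s) := by
  apply le_antisymm
  · exact le_min (biSup_mono fun s hs => hs.1) (biSup_mono fun s hs => hs.2)
  · refine le_of_forall_lt fun c hc => ?_
    obtain ⟨hcA, hcB⟩ := lt_min_iff.mp hc
    obtain ⟨s, hsA, hcs⟩ : ∃ s ∈ A, c < ENNReal.ofReal s := by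
      simpa [lt_iSup_iff] using hcA
    obtain ⟨t, htB, hct⟩ : ∃ t ∈ B, c < ENNReal.ofReal t := by
      simpa [lt_iSup_iff] using hcB
    have hs0 : 0 ≤ s := by
      by_contra h
      rw [ENNReal.ofReal_eq_zero.mpr (le_of_not_ge h)] at hcs
      simp at hcs
    have ht0 : 0 ≤ t := by
      by_contra h
      rw [ENNReal.ofReal_eq_zero.mpr (le_of_not_ge h)] at hct
      simp at hct
    have huA : min s t ∈ A := hAd s hsA _ (le_min hs0 ht0) (min_le_left _ _)
    have huB : min s t ∈ B := hBd t htB _ (le_min hs0 ht0) (min_le_right _ _)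
    have hcu : c < ENNReal.ofReal (min s t) := by
      rcases min_cases s t with ⟨h1, _⟩ | ⟨h1, _⟩ <;> rw [h1]
      exacts [hcs, hct]
    exact hcu.trans_le (le_biSup _ ⟨huA, huB⟩)

/-- dim_F (μ × ν) = min (dim_F μ) (dim_F ν). -/
theorem stmt1 (d k : ℕ) (hk : 1 ≤ k) (hkd : k < d)
    (μ : Measure (Eℝ k)) (ν : Measure (Eℝ (d - k)))
    [IsFiniteMeasure μ] [IsFiniteMeasure ν] (hμ : μ ≠ 0) (hν : ν ≠ 0) :
    fDim (mprod μ ν) = min (fDim μ) (fDim ν) := by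
  rw [fDim_eq_biSup (mprod μ ν), fSet_mprod μ ν hμ hν,
    biSup_inter_eq_min _ _ (fSet_down μ) (fSet_down ν)]
  rfl
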